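/- (Equation (7) / Lemma 2.7(b)) In the setting of Construction 2.6, for every β ∈ [0, β*] and every h = 1,...,n-1, one has V(Y_1(β),...,Y_h(β)) = β·v_h. In particular, for β ∈ (0, β*) the random variables X_1(β),...,X_n(β) are i.i.d. [0,1]-valued and satisfy P(X_1(β) ∈ {1, β·v_{n-1}, ..., β·v_1, 0}) = 1 with P(X_1(β) = 1) > 0 and P(X_1(β) = 0) > 0, with respect to the sampling cost c(β) > 0. -/

import Mathlib

open MeasureTheory ProbabilityTheory

/-- The σ-algebra generated by `Y 1, ..., Y i`. -/
def priorSigma {Ω : Type*} (Y : ℕ → Ω → ℝ) (i : ℕ) : MeasurableSpace Ω :=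
  ⨆ j ∈ Finset.Icc 1 i, MeasurableSpace.comap (Y j) Real.measurableSpace

/-- `τ` is a stopping rule for `Y 1, ..., Y n`: it takes values in `{1, ..., n}` and
each event `{τ = i}` depends only on `Y 1, ..., Y i`. -/
def IsStopRule {Ω : Type*} (Y : ℕ → Ω → ℝ) (n : ℕ) (τ : Ω → ℕ) : Prop :=
  (∀ ω, τ ω ∈ Finset.Icc 1 n) ∧
  ∀ i ∈ Finset.Icc 1 n, MeasurableSet[priorSigma Y i] {ω | τ ω = i}

/-- `V(Y_1,...,Y_n) = sup_τ E(Y_τ)`: the optimal expected return of the statistician. -/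
noncomputable def Vn {Ω : Type*} [MeasurableSpace Ω] (μ : Measure Ω)
    (Y : ℕ → Ω → ℝ) (n : ℕ) : ℝ :=
  sSup {r | ∃ τ, IsStopRule Y n τ ∧ r = ∫ ω, Y (τ ω) ω ∂μ}

/-- `M(Y_1,...,Y_n) = E(max_{1 ≤ i ≤ n} Y_i)`: the expected return of the prophet. -/
noncomputable def Mn {Ω : Type*} [MeasurableSpace Ω] (μ : Measure Ω)
    (Y : ℕ → Ω → ℝ) (n : ℕ) : ℝ :=
  ∫ ω, sSup ((fun i => Y i ω) '' Set.Icc 1 n) ∂μ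

set_option linter.unusedVariables false


/-!
By backward induction, `V(Y_1, …, Y_h) = w_h` where `w_0 = 0` and
`w_{k+1} = E max(X_1, w_k) - c`: writing `K_j = w_{h-j} - j c`, independence gives
`E[max(Y_{j+1}, K_{j+1}); τ > j] = P(τ > j) K_j` for every stopping rule `τ`, so
`E Y_τ ≤ Σ_j (P(τ > j) K_j - P(τ > j+1) K_{j+1}) = w_h`, with equality for the rule that stops
as soon as `Y_i ≥ K_i`.

The `w_k` increase, and `X_1 ∈ {1, 0, w_1, …, w_{n-1}}` a.s. gives
`max(X_1, w_{n-2}) ≤ (1 - w_{n-1}) 1_{X_1 = 1} + w_{n-1}`, i.e. `p w_{n-1} ≤ p - c` with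
`p = P(X_1 = 1)`, which is `β* w_{n-1} ≤ 1`. Hence for `β ≤ β*` all `β w_k ≤ 1`, so
`max(X_1(β), β w_k) = β max(X_1, w_k) + (1 - β) 1_{X_1 = 1}`, and the cost
`c(β) = β c + (1 - β) p` makes `w_k(β) = β w_k` an induction.
-/

section

variable {Ω : Type*} [MeasurableSpace Ω] {μ : Measure Ω} [IsFiniteMeasure μ]

lemma MeasureTheory.Integrable.max_const {f : Ω → ℝ} (hf : Integrable f μ) (a : ℝ) :
    Integrable (fun ω => max (f ω) a) μ :=
  hf.sup (integrable_const a)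

end

section PriorSigma

variable {Ω : Type*} {Y Z : ℕ → Ω → ℝ}

lemma priorSigma_mono {i i' : ℕ} (h : i ≤ i') : priorSigma Y i ≤ priorSigma Y i' :=
  iSup₂_le fun j hj => le_iSup₂_of_le (f := fun j (_ : j ∈ Finset.Icc 1 i') =>
    MeasurableSpace.comap (Y j) Real.measurableSpace) j
    (by simp only [Finset.mem_Icc] at hj ⊢; omega) le_rfl

lemma comap_le_priorSigma {i j : ℕ} (hj : j ∈ Finset.Icc 1 i) :
    MeasurableSpace.comap (Y j) Real.measurableSpace ≤ priorSigma Y i :=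
  le_iSup₂_of_le (f := fun j (_ : j ∈ Finset.Icc 1 i) =>
    MeasurableSpace.comap (Y j) Real.measurableSpace) j hj le_rfl

lemma priorSigma_le [MeasurableSpace Ω] (hY : ∀ i, Measurable (Y i)) (i : ℕ) :
    priorSigma Y i ≤ ‹MeasurableSpace Ω› :=
  iSup₂_le fun j _ => (hY j).comap_le

lemma priorSigma_eq_of_sub (a : ℕ → ℝ) (hY : ∀ i ω, Y i ω = Z i ω - a i) (i : ℕ) :
    priorSigma Y i = priorSigma Z i := by
  have hcomap : ∀ j, MeasurableSpace.comap (Y j) Real.measurableSpace =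
      MeasurableSpace.comap (Z j) Real.measurableSpace := fun j => by
    rw [show Y j = (· - a j) ∘ Z j from funext (hY j), ← MeasurableSpace.comap_comp]
    exact congrArg _ (MeasurableEquiv.subRight (a j)).measurableEmbedding.comap_eq
  simp only [priorSigma, hcomap]

end PriorSigma

section Independence

variable {Ω : Type*} [MeasurableSpace Ω] {μ : Measure Ω} {n : ℕ} {Z : ℕ → Ω → ℝ}

lemma ProbabilityTheory.iIndepFun.indep_priorSigma (hZ : ∀ i, Measurable (Z i))
    (hindep : iIndepFun (fun i : Fin n => Z (i.1 + 1)) μ) {i j : ℕ} (hji : j < i) (hin : i ≤ n) :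
    Indep (priorSigma Z j) (MeasurableSpace.comap (Z i) Real.measurableSpace) μ := by
  obtain ⟨k, rfl⟩ : ∃ k, i = k + 1 := ⟨i - 1, by omega⟩
  have hind := indep_iSup_of_disjoint (fun l : Fin n => (hZ (l.1 + 1)).comap_le)
    ((iIndepFun_iff_iIndep _ _ μ).1 hindep)
    (S := {l | l.1 < j}) (T := {⟨k, by omega⟩})
    (by simp only [Set.disjoint_singleton_right, Set.mem_ofPred_eq, not_lt]; omega)
  refine indep_of_indep_of_le_right (indep_of_indep_of_le_left hind ?_) ?_
  · refine iSup₂_le fun m hm => ?_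
    simp only [Finset.mem_Icc] at hm
    obtain ⟨l, rfl⟩ : ∃ l, m = l + 1 := ⟨m - 1, by omega⟩
    exact le_iSup₂_of_le (f := fun l (_ : l ∈ {l : Fin n | l.1 < j}) =>
      MeasurableSpace.comap (Z (l.1 + 1)) Real.measurableSpace) ⟨l, by omega⟩
      (show l < j by omega) le_rfl
  · simp

end Independence

section StopRule

variable {Ω : Type*} {Y : ℕ → Ω → ℝ} {h : ℕ} {τ : Ω → ℕ}

lemma IsStopRule.measurableSet_lt (hτ : IsStopRule Y h τ) {j : ℕ} (hj : j ≤ h) :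
    MeasurableSet[priorSigma Y j] {ω | j < τ ω} := by
  have hset : {ω | j < τ ω} = ⋂ i ∈ Finset.Icc 1 j, {ω | τ ω = i}ᶜ := by
    ext ω
    have := Finset.mem_Icc.1 (hτ.1 ω)
    simp only [Set.mem_ofPred_eq, Set.mem_iInter, Finset.mem_Icc, Set.mem_compl_iff]
    constructor
    · intro hlt i hi heq; omega
    · intro hne; by_contra hle; exact hne (τ ω) ⟨this.1, not_lt.1 hle⟩ rfl
  rw [hset]
  refine Finset.measurableSet_biInter _ fun i hi => (priorSigma_mono ?_ _ (hτ.2 i ?_)).compl <;>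
    simp only [Finset.mem_Icc] at hi ⊢ <;> omega

lemma isStopRule_of_measurableSet_lt (hτ : ∀ ω, τ ω ∈ Finset.Icc 1 h)
    (hmeas : ∀ j < h, MeasurableSet[priorSigma Y j] {ω | j < τ ω}) : IsStopRule Y h τ := by
  refine ⟨hτ, fun i hi => ?_⟩
  have hi' := Finset.mem_Icc.1 hi
  have hset : {ω | τ ω = i} = {ω | i - 1 < τ ω} \ {ω | i < τ ω} := by
    ext ω; simp only [Set.mem_ofPred_eq, Set.mem_sdiff, not_lt]; omega
  rw [hset]
  refine (priorSigma_mono (Nat.sub_le i 1) _ (hmeas _ (by omega))).diff ?_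
  rcases hi'.2.lt_or_eq with hih | rfl
  · exact hmeas i hih
  · convert MeasurableSet.empty
    ext ω; simpa using (Finset.mem_Icc.1 (hτ ω)).2

lemma IsStopRule.integral_eq_sum [MeasurableSpace Ω] {μ : Measure Ω} (hYm : ∀ i, Measurable (Y i))
    (hYint : ∀ i ∈ Finset.Icc 1 h, Integrable (Y i) μ) (hτ : IsStopRule Y h τ) :
    ∫ ω, Y (τ ω) ω ∂μ =
      ∑ j ∈ Finset.range h, ∫ ω, {ω | τ ω = j + 1}.indicator (Y (j + 1)) ω ∂μ := by
  have hmem : ∀ j ∈ Finset.range h, j + 1 ∈ Finset.Icc 1 h := fun j hj => by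
    simp only [Finset.mem_range, Finset.mem_Icc] at hj ⊢; omega
  rw [← integral_finsetSum _ fun j hj =>
    (hYint _ (hmem j hj)).indicator (priorSigma_le hYm _ _ (hτ.2 _ (hmem j hj)))]
  congr 1 with ω
  have hτω := Finset.mem_Icc.1 (hτ.1 ω)
  rw [Finset.sum_eq_single_of_mem (τ ω - 1) (Finset.mem_range.2 (by omega))]
  · simp [show τ ω - 1 + 1 = τ ω by omega]
  · intro j _ hj
    exact Set.indicator_of_notMem (s := {ω | τ ω = j + 1})
      (fun (hτj : τ ω = j + 1) => hj (by omega)) _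

end StopRule

section ThresholdRule

variable {Ω : Type*} {Y : ℕ → Ω → ℝ} {K : ℕ → ℝ} {h : ℕ} {ω : Ω}

noncomputable def thresholdRule (Y : ℕ → Ω → ℝ) (K : ℕ → ℝ) (h : ℕ) (ω : Ω) : ℕ :=
  sInf {i | 1 ≤ i ∧ (i = h ∨ K i ≤ Y i ω)}

lemma thresholdRule_spec (hh : 1 ≤ h) :
    1 ≤ thresholdRule Y K h ω ∧
      (thresholdRule Y K h ω = h ∨ K (thresholdRule Y K h ω) ≤ Y (thresholdRule Y K h ω) ω) :=
  Nat.sInf_mem (s := {i | 1 ≤ i ∧ (i = h ∨ K i ≤ Y i ω)}) ⟨h, hh, Or.inl rfl⟩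

lemma thresholdRule_le {i : ℕ} (hi : 1 ≤ i) (hstop : i = h ∨ K i ≤ Y i ω) :
    thresholdRule Y K h ω ≤ i :=
  Nat.sInf_le (show i ∈ {i | 1 ≤ i ∧ (i = h ∨ K i ≤ Y i ω)} from ⟨hi, hstop⟩)

lemma thresholdRule_mem_Icc (hh : 1 ≤ h) : thresholdRule Y K h ω ∈ Finset.Icc 1 h :=
  Finset.mem_Icc.2 ⟨(thresholdRule_spec hh).1, thresholdRule_le hh (Or.inl rfl)⟩

lemma lt_thresholdRule_iff (hh : 1 ≤ h) {j : ℕ} (hj : j < h) :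
    j < thresholdRule Y K h ω ↔ ∀ i ∈ Finset.Icc 1 j, Y i ω < K i := by
  constructor
  · intro hlt i hi
    by_contra hle
    have := thresholdRule_le (h := h) (Finset.mem_Icc.1 hi).1 (Or.inr (not_lt.1 hle))
    simp only [Finset.mem_Icc] at hi
    omega
  · intro hbelow
    by_contra hle
    obtain ⟨h1, heq | hge⟩ := thresholdRule_spec (Y := Y) (K := K) (ω := ω) hh
    · omega
    · exact (hbelow _ (Finset.mem_Icc.2 ⟨h1, not_lt.1 hle⟩)).not_ge hge

lemma isStopRule_thresholdRule (hh : 1 ≤ h) : IsStopRule Y h (thresholdRule Y K h) := by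
  refine isStopRule_of_measurableSet_lt (fun ω => thresholdRule_mem_Icc hh) fun j hj => ?_
  have hset : {ω | j < thresholdRule Y K h ω} = ⋂ i ∈ Finset.Icc 1 j, Y i ⁻¹' Set.Iio (K i) := by
    ext ω; simp [lt_thresholdRule_iff hh hj]
  rw [hset]
  exact Finset.measurableSet_biInter _ fun i hi =>
    comap_le_priorSigma hi _ ⟨_, measurableSet_Iio, rfl⟩

end ThresholdRule

section StageBound

variable {Ω : Type*} {Y : ℕ → Ω → ℝ} {K : ℕ → ℝ} {τ : Ω → ℕ} {j : ℕ}

/-- A pointwise bound on the payoff collected at time `j + 1` whose expectations telescope to the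
value of the game. -/
noncomputable def stageBound (Y : ℕ → Ω → ℝ) (K : ℕ → ℝ) (τ : Ω → ℕ) (j : ℕ) (ω : Ω) : ℝ :=
  {ω | j < τ ω}.indicator (fun ω => max (Y (j + 1) ω) (K (j + 1))) ω -
    {ω | j + 1 < τ ω}.indicator (fun _ => K (j + 1)) ω

lemma indicator_le_stageBound (ω : Ω) :
    {ω | τ ω = j + 1}.indicator (Y (j + 1)) ω ≤ stageBound Y K τ j ω := by
  simp only [stageBound, Set.indicator, Set.mem_ofPred_eq]
  split_ifs <;> first | omega | simp

lemma indicator_eq_stageBound {ω : Ω} (hstop : τ ω = j + 1 → K (j + 1) ≤ Y (j + 1) ω)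
    (hcont : j + 1 < τ ω → Y (j + 1) ω ≤ K (j + 1)) :
    {ω | τ ω = j + 1}.indicator (Y (j + 1)) ω = stageBound Y K τ j ω := by
  rcases lt_trichotomy (τ ω) (j + 1) with hlt | heq | hgt
  · simp [stageBound, hlt.ne, show ¬ j < τ ω by omega, show ¬ j + 1 < τ ω by omega]
  · simp [stageBound, heq, max_eq_left (hstop heq)]
  · simp [stageBound, hgt.ne', show j < τ ω by omega, hgt, max_eq_right (hcont hgt)]

lemma IsStopRule.integrable_stageBound [MeasurableSpace Ω] {μ : Measure Ω} [IsFiniteMeasure μ]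
    {h : ℕ} (hYm : ∀ i, Measurable (Y i)) (hτ : IsStopRule Y h τ) (hY : Integrable (Y (j + 1)) μ)
    (hj : j < h) : Integrable (stageBound Y K τ j) μ :=
  ((hY.max_const _).indicator (priorSigma_le hYm _ _ (hτ.measurableSet_lt hj.le))).sub
    ((integrable_const _).indicator (priorSigma_le hYm _ _ (hτ.measurableSet_lt hj)))

end StageBound

section BackwardInduction

variable {Ω : Type*} [MeasurableSpace Ω] {μ : Measure Ω}

noncomputable def backwardValue (μ : Measure Ω) (Z : Ω → ℝ) (c : ℝ) : ℕ → ℝ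
  | 0 => 0
  | k + 1 => (∫ ω, max (Z ω) (backwardValue μ Z c k) ∂μ) - c

lemma backwardValue_one {Z : Ω → ℝ} {c : ℝ} (hZ0 : ∀ ω, 0 ≤ Z ω) :
    backwardValue μ Z c 1 = (∫ ω, Z ω ∂μ) - c := by
  simp [backwardValue, max_eq_left (hZ0 _)]

/-- The threshold, in units of `Y i = Z i - i * c`, above which it is optimal to stop at time `j`
when the horizon is `h`. -/
noncomputable def stopThreshold (μ : Measure Ω) (Z : Ω → ℝ) (c : ℝ) (h j : ℕ) : ℝ :=
  backwardValue μ Z c (h - j) - j * c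

end BackwardInduction

section DynamicProgramming

variable {Ω : Type*} [MeasurableSpace Ω] {μ : Measure Ω} [IsProbabilityMeasure μ]
  {n h j : ℕ} {Z Y : ℕ → Ω → ℝ} {c : ℝ} {τ : Ω → ℕ}

lemma measurable_of_sub (hZ : ∀ i, Measurable (Z i)) (hY : ∀ i ω, Y i ω = Z i ω - i * c)
    (i : ℕ) : Measurable (Y i) := by
  simpa only [← funext (hY i)] using (hZ i).sub_const (i * c)

lemma integrable_of_sub (hident : ∀ i ∈ Set.Icc 1 n, IdentDistrib (Z i) (Z 1) μ μ)
    (hint : Integrable (Z 1) μ) (hY : ∀ i ω, Y i ω = Z i ω - i * c) {i : ℕ}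
    (hi : i ∈ Set.Icc 1 n) : Integrable (Y i) μ := by
  rw [funext (hY i)]
  exact ((hident i hi).integrable_iff.2 hint).sub (integrable_const _)

lemma integral_max_stopThreshold (hident : ∀ i ∈ Set.Icc 1 n, IdentDistrib (Z i) (Z 1) μ μ)
    (hint : Integrable (Z 1) μ) (hY : ∀ i ω, Y i ω = Z i ω - i * c) (hjh : j < h) (hhn : h ≤ n) :
    ∫ ω, max (Y (j + 1) ω) (stopThreshold μ (Z 1) c h (j + 1)) ∂μ =
      stopThreshold μ (Z 1) c h j := by
  have hidj := hident (j + 1) ⟨by omega, by omega⟩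
  simp only [stopThreshold, hY, max_sub_sub_right]
  set w := backwardValue μ (Z 1) c
  have hmax : ∫ ω, max (Z (j + 1) ω) (w (h - (j + 1))) ∂μ =
      ∫ ω, max (Z 1 ω) (w (h - (j + 1))) ∂μ :=
    (hidj.comp (measurable_id.max measurable_const)).integral_eq
  have hrec : w (h - j) = (∫ ω, max (Z 1 ω) (w (h - (j + 1))) ∂μ) - c := by
    rw [show h - j = h - (j + 1) + 1 by omega]; rfl
  rw [integral_sub ((hidj.integrable_iff.2 hint).max_const _) (integrable_const _),
    hmax, hrec, integral_const, probReal_univ, one_smul]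
  push_cast
  ring

lemma integral_stageBound (hZ : ∀ i, Measurable (Z i))
    (hindep : iIndepFun (fun i : Fin n => Z (i.1 + 1)) μ)
    (hident : ∀ i ∈ Set.Icc 1 n, IdentDistrib (Z i) (Z 1) μ μ) (hint : Integrable (Z 1) μ)
    (hY : ∀ i ω, Y i ω = Z i ω - i * c) (hτ : IsStopRule Y h τ) (hjh : j < h) (hhn : h ≤ n) :
    ∫ ω, stageBound Y (stopThreshold μ (Z 1) c h) τ j ω ∂μ =
      μ.real {ω | j < τ ω} * stopThreshold μ (Z 1) c h j -
        μ.real {ω | j + 1 < τ ω} * stopThreshold μ (Z 1) c h (j + 1) := by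
  set K := stopThreshold μ (Z 1) c h
  have hB : MeasurableSet[priorSigma Z j] {ω | j < τ ω} :=
    priorSigma_eq_of_sub _ hY j ▸ hτ.measurableSet_lt hjh.le
  have hB' : MeasurableSet {ω | j + 1 < τ ω} :=
    priorSigma_le (measurable_of_sub hZ hY) _ _ (hτ.measurableSet_lt hjh)
  have hYint := integrable_of_sub hident hint hY (i := j + 1) ⟨by omega, by omega⟩
  have hsetInt : ∫ ω in {ω | j < τ ω}, max (Y (j + 1) ω) (K (j + 1)) ∂μ =
      μ.real {ω | j < τ ω} * ∫ ω, max (Y (j + 1) ω) (K (j + 1)) ∂μ := by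
    simp only [hY]
    exact (hindep.indep_priorSigma hZ (Nat.lt_succ_self j) (by omega)).setIntegral_eq_mul
      (priorSigma_le hZ j) (hZ _).aemeasurable hB
      (((measurable_id.sub_const _).max measurable_const).aestronglyMeasurable)
  unfold stageBound
  rw [integral_sub ((hYint.max_const _).indicator (priorSigma_le hZ j _ hB))
      ((integrable_const _).indicator hB'),
    integral_indicator (priorSigma_le hZ j _ hB), hsetInt,
    integral_max_stopThreshold hident hint hY hjh hhn, integral_indicator_const _ hB', smul_eq_mul]

lemma sum_integral_stageBound (hZ : ∀ i, Measurable (Z i))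
    (hindep : iIndepFun (fun i : Fin n => Z (i.1 + 1)) μ)
    (hident : ∀ i ∈ Set.Icc 1 n, IdentDistrib (Z i) (Z 1) μ μ) (hint : Integrable (Z 1) μ)
    (hY : ∀ i ω, Y i ω = Z i ω - i * c) (hτ : IsStopRule Y h τ) (hhn : h ≤ n) :
    ∑ j ∈ Finset.range h, ∫ ω, stageBound Y (stopThreshold μ (Z 1) c h) τ j ω ∂μ =
      backwardValue μ (Z 1) c h := by
  rw [Finset.sum_congr rfl fun j hj =>
      integral_stageBound hZ hindep hident hint hY hτ (Finset.mem_range.1 hj) hhn,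
    Finset.sum_range_sub' (fun j => μ.real {ω | j < τ ω} * stopThreshold μ (Z 1) c h j)]
  have hstarted : {ω | 0 < τ ω} = Set.univ :=
    Set.eq_univ_of_forall fun ω => (Finset.mem_Icc.1 (hτ.1 ω)).1
  have hstopped : {ω | h < τ ω} = ∅ :=
    Set.eq_empty_of_forall_notMem fun ω => not_lt.2 (Finset.mem_Icc.1 (hτ.1 ω)).2
  simp [hstarted, hstopped, stopThreshold]

lemma integral_comp_le_backwardValue (hZ : ∀ i, Measurable (Z i))
    (hindep : iIndepFun (fun i : Fin n => Z (i.1 + 1)) μ)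
    (hident : ∀ i ∈ Set.Icc 1 n, IdentDistrib (Z i) (Z 1) μ μ) (hint : Integrable (Z 1) μ)
    (hY : ∀ i ω, Y i ω = Z i ω - i * c) (hτ : IsStopRule Y h τ) (hhn : h ≤ n) :
    ∫ ω, Y (τ ω) ω ∂μ ≤ backwardValue μ (Z 1) c h := by
  have hYm := measurable_of_sub hZ hY
  have hYint : ∀ i ∈ Finset.Icc 1 h, Integrable (Y i) μ := fun i hi =>
    integrable_of_sub hident hint hY ⟨(Finset.mem_Icc.1 hi).1, (Finset.mem_Icc.1 hi).2.trans hhn⟩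
  rw [hτ.integral_eq_sum hYm hYint, ← sum_integral_stageBound hZ hindep hident hint hY hτ hhn]
  refine Finset.sum_le_sum fun j hj => ?_
  have hjh := Finset.mem_range.1 hj
  have hj' : j + 1 ∈ Finset.Icc 1 h := Finset.mem_Icc.2 ⟨by omega, by omega⟩
  exact integral_mono ((hYint _ hj').indicator (priorSigma_le hYm _ _ (hτ.2 _ hj')))
    (hτ.integrable_stageBound hYm (hYint _ hj') hjh) indicator_le_stageBound

lemma integral_comp_thresholdRule (hZ : ∀ i, Measurable (Z i))
    (hindep : iIndepFun (fun i : Fin n => Z (i.1 + 1)) μ)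
    (hident : ∀ i ∈ Set.Icc 1 n, IdentDistrib (Z i) (Z 1) μ μ) (hint : Integrable (Z 1) μ)
    (hnonneg : ∀ i ∈ Set.Icc 1 n, ∀ ω, 0 ≤ Z i ω)
    (hY : ∀ i ω, Y i ω = Z i ω - i * c) (hh : h ∈ Set.Icc 1 n) :
    ∫ ω, Y (thresholdRule Y (stopThreshold μ (Z 1) c h) h ω) ω ∂μ =
      backwardValue μ (Z 1) c h := by
  set K := stopThreshold μ (Z 1) c h
  have hτ := isStopRule_thresholdRule (Y := Y) (K := K) hh.1
  rw [hτ.integral_eq_sum (measurable_of_sub hZ hY) (fun i hi => integrable_of_sub hident hint hY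
      ⟨(Finset.mem_Icc.1 hi).1, (Finset.mem_Icc.1 hi).2.trans hh.2⟩),
    ← sum_integral_stageBound hZ hindep hident hint hY hτ hh.2]
  refine Finset.sum_congr rfl fun j hj => integral_congr_ae (ae_of_all _ fun ω =>
    indicator_eq_stageBound ?_ ?_)
  · intro hstop
    obtain ⟨-, hlast | habove⟩ := thresholdRule_spec (Y := Y) (K := K) (ω := ω) hh.1
    · have hZh := hnonneg h hh ω
      simp only [K, stopThreshold, ← hstop, hlast, Nat.sub_self, backwardValue, hY]
      linarith
    · rwa [hstop] at habove
  · intro hcont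
    have hτω := Finset.mem_Icc.1 (thresholdRule_mem_Icc (Y := Y) (K := K) (ω := ω) hh.1)
    exact ((lt_thresholdRule_iff hh.1 (by omega)).1 hcont (j + 1) (by simp)).le

theorem Vn_eq_backwardValue (hZ : ∀ i, Measurable (Z i))
    (hindep : iIndepFun (fun i : Fin n => Z (i.1 + 1)) μ)
    (hident : ∀ i ∈ Set.Icc 1 n, IdentDistrib (Z i) (Z 1) μ μ) (hint : Integrable (Z 1) μ)
    (hnonneg : ∀ i ∈ Set.Icc 1 n, ∀ ω, 0 ≤ Z i ω)
    (hY : ∀ i ω, Y i ω = Z i ω - i * c) (hh : h ∈ Set.Icc 1 n) :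
    Vn μ Y h = backwardValue μ (Z 1) c h :=
  IsGreatest.csSup_eq
    ⟨⟨_, isStopRule_thresholdRule hh.1,
        (integral_comp_thresholdRule hZ hindep hident hint hnonneg hY hh).symm⟩,
      fun _ ⟨_, hτ, hr⟩ => hr ▸ integral_comp_le_backwardValue hZ hindep hident hint hY hτ hh.2⟩

theorem Vn_eq_backwardValue_of_mem_Icc {M : ℝ} (hZ : ∀ i, Measurable (Z i))
    (hindep : iIndepFun (fun i : Fin n => Z (i.1 + 1)) μ)
    (hident : ∀ i ∈ Set.Icc 1 n, IdentDistrib (Z i) (Z 1) μ μ)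
    (hbdd : ∀ i ∈ Set.Icc 1 n, ∀ ω, Z i ω ∈ Set.Icc 0 M)
    (hY : ∀ i ω, Y i ω = Z i ω - i * c) (hh : h ∈ Set.Icc 1 n) :
    Vn μ Y h = backwardValue μ (Z 1) c h :=
  Vn_eq_backwardValue hZ hindep hident
    (Integrable.of_mem_Icc 0 M (hZ 1).aemeasurable
      (ae_of_all _ (hbdd 1 ⟨le_rfl, hh.1.trans hh.2⟩)))
    (fun i hi ω => (hbdd i hi ω).1) hY hh

end DynamicProgramming

section UnitIntervalValues

variable {Ω : Type*} [MeasurableSpace Ω] {μ : Measure Ω} [IsProbabilityMeasure μ]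
  {Z : Ω → ℝ} {c : ℝ}

lemma backwardValue_le_one (hZ : Measurable Z) (hZ01 : ∀ ω, Z ω ∈ Set.Icc 0 1) (hc : 0 ≤ c)
    (k : ℕ) : backwardValue μ Z c k ≤ 1 := by
  induction k with
  | zero => exact zero_le_one
  | succ k ih =>
    have hint := (Integrable.of_mem_Icc 0 1 hZ.aemeasurable (ae_of_all _ hZ01)).max_const
      (μ := μ) (backwardValue μ Z c k)
    have : ∫ ω, max (Z ω) (backwardValue μ Z c k) ∂μ ≤ 1 := by
      simpa using integral_mono hint (integrable_const 1) fun ω => max_le (hZ01 ω).2 ih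
    simp only [backwardValue]
    linarith

lemma backwardValue_monotone (hZ : Measurable Z) (hZ01 : ∀ ω, Z ω ∈ Set.Icc 0 1)
    (hc : c ≤ ∫ ω, Z ω ∂μ) : Monotone (backwardValue μ Z c) := by
  have hint := Integrable.of_mem_Icc 0 1 hZ.aemeasurable (ae_of_all μ hZ01)
  refine monotone_nat_of_le_succ fun k => ?_
  induction k with
  | zero =>
    rw [zero_add, backwardValue_one fun ω => (hZ01 ω).1]
    exact sub_nonneg.2 hc
  | succ k ih =>
    simp only [backwardValue] at ih ⊢
    have := integral_mono (hint.max_const _) (hint.max_const _)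
      fun ω => max_le_max (le_refl (Z ω)) ih
    linarith

lemma measureReal_mul_backwardValue_le (hZ : Measurable Z) (hZ01 : ∀ ω, Z ω ∈ Set.Icc 0 1)
    (hc : 0 ≤ c) (hmono : Monotone (backwardValue μ Z c)) {m : ℕ}
    (hsupp : ∀ᵐ ω ∂μ, Z ω ∈ insert 1 (insert 0 (backwardValue μ Z c '' Set.Icc 1 (m + 1)))) :
    μ.real {ω | Z ω = 1} * backwardValue μ Z c (m + 1) ≤ μ.real {ω | Z ω = 1} - c := by
  set w := backwardValue μ Z c
  have hone : MeasurableSet {ω | Z ω = 1} := hZ measurableSet_eq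
  have hint := Integrable.of_mem_Icc 0 1 hZ.aemeasurable (ae_of_all μ hZ01)
  have hbound : ∀ᵐ ω ∂μ,
      max (Z ω) (w m) ≤ {ω | Z ω = 1}.indicator (fun _ => 1 - w (m + 1)) ω + w (m + 1) := by
    filter_upwards [hsupp] with ω hω
    by_cases h1 : Z ω = 1
    · simpa [h1] using backwardValue_le_one hZ hZ01 hc m
    · have hZw : Z ω ≤ w (m + 1) := by
        rcases hω with h1' | h0 | ⟨i, hi, hi'⟩
        · exact absurd h1' h1
        · exact h0 ▸ hmono (Nat.zero_le _)
        · exact hi' ▸ hmono hi.2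
      simpa [h1] using ⟨hZw, hmono (Nat.le_succ m)⟩
  have hindicator : Integrable ({ω | Z ω = 1}.indicator fun _ => 1 - w (m + 1)) μ :=
    (integrable_const _).indicator hone
  have : ∫ ω, max (Z ω) (w m) ∂μ ≤
      ∫ ω, ({ω | Z ω = 1}.indicator (fun _ => 1 - w (m + 1)) ω + w (m + 1)) ∂μ :=
    integral_mono_ae (hint.max_const _) (hindicator.add (integrable_const _)) hbound
  rw [integral_add hindicator (integrable_const _), integral_indicator_const _ hone] at this
  simp only [smul_eq_mul, integral_const, probReal_univ, one_mul] at this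
  have hrec : w (m + 1) = (∫ ω, max (Z ω) (w m) ∂μ) - c := rfl
  linear_combination this + hrec

lemma lt_measureReal_setOf_eq_one (hZ : Measurable Z) (hZ01 : ∀ ω, Z ω ∈ Set.Icc 0 1) (hc : 0 < c)
    (hEZ : c < ∫ ω, Z ω ∂μ) {m : ℕ}
    (hsupp : ∀ᵐ ω ∂μ, Z ω ∈ insert 1 (insert 0 (backwardValue μ Z c '' Set.Icc 1 (m + 1))))
    {p : ℝ} (hp : p = μ.real {ω | Z ω = 1}) : c < p := by
  have hmono := backwardValue_monotone hZ hZ01 hEZ.le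
  have hkey := hp ▸ measureReal_mul_backwardValue_le hZ hZ01 hc.le hmono hsupp
  have hw : 0 < backwardValue μ Z c (m + 1) :=
    (sub_pos.2 hEZ).trans_le (backwardValue_one (fun ω => (hZ01 ω).1) ▸ hmono (by omega))
  have hcp : c ≤ p := by nlinarith [hp ▸ measureReal_nonneg (μ := μ) (s := {ω | Z ω = 1})]
  nlinarith [mul_pos (hc.trans_le hcp) hw]

lemma mul_backwardValue_le_one (hZ : Measurable Z) (hZ01 : ∀ ω, Z ω ∈ Set.Icc 0 1) (hc : 0 < c)
    (hEZ : c < ∫ ω, Z ω ∂μ) {m : ℕ}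
    (hsupp : ∀ᵐ ω ∂μ, Z ω ∈ insert 1 (insert 0 (backwardValue μ Z c '' Set.Icc 1 (m + 1))))
    {p β : ℝ} (hp : p = μ.real {ω | Z ω = 1}) (hβ : β ∈ Set.Icc 0 (-p / (c - p))) {k : ℕ}
    (hk : k ≤ m + 1) : β * backwardValue μ Z c k ≤ 1 := by
  have hmono := backwardValue_monotone hZ hZ01 hEZ.le
  have hkey := hp ▸ measureReal_mul_backwardValue_le hZ hZ01 hc.le hmono hsupp
  have hpc := lt_measureReal_setOf_eq_one hZ hZ01 hc hEZ hsupp hp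
  have hβp : β * (p - c) ≤ p := by
    have := hβ.2
    rwa [← neg_sub, div_neg, neg_div, neg_neg, le_div_iff₀ (sub_pos.2 hpc)] at this
  have hwk : β * backwardValue μ Z c k ≤ β * backwardValue μ Z c (m + 1) :=
    mul_le_mul_of_nonneg_left (hmono hk) hβ.1
  have hw : 0 ≤ backwardValue μ Z c (m + 1) := hmono (Nat.zero_le _)
  nlinarith

end UnitIntervalValues

noncomputable def scaleExceptOne (β x : ℝ) : ℝ := if x = 1 then 1 else β * x

section ScaleExceptOne

variable {β : ℝ}

lemma measurable_scaleExceptOne : Measurable (scaleExceptOne β) :=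
  Measurable.ite measurableSet_eq measurable_const (measurable_const_mul β)

lemma scaleExceptOne_mem_insert {V : ℕ → ℝ} {s : Set ℕ} {x : ℝ}
    (hx : x ∈ insert 1 (insert 0 (V '' s))) :
    scaleExceptOne β x ∈ insert (1 : ℝ) (insert 0 ((fun i => β * V i) '' s)) := by
  unfold scaleExceptOne
  split_ifs with h1
  · exact Set.mem_insert _ _
  · rcases hx with rfl | rfl | ⟨i, hi, rfl⟩
    · exact absurd rfl h1
    · simp
    · exact Set.mem_insert_of_mem _ (Set.mem_insert_of_mem _ ⟨i, hi, rfl⟩)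

lemma scaleExceptOne_mem_Icc {V : ℕ → ℝ} {s : Set ℕ} {x : ℝ}
    (hx : x ∈ insert 1 (insert 0 (V '' s))) (hV : ∀ i ∈ s, β * V i ∈ Set.Icc 0 1) :
    scaleExceptOne β x ∈ Set.Icc 0 1 := by
  rcases scaleExceptOne_mem_insert (β := β) hx with h | h | ⟨i, hi, h⟩
  · simp [h]
  · simp [h]
  · exact h ▸ hV i hi

lemma scaleExceptOne_mem_Icc_max (hβ : 0 ≤ β) {x : ℝ} (hx : x ∈ Set.Icc 0 1) :
    scaleExceptOne β x ∈ Set.Icc 0 (max 1 β) := by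
  unfold scaleExceptOne
  split_ifs
  · exact ⟨zero_le_one, le_max_left _ _⟩
  · exact ⟨mul_nonneg hβ hx.1, (mul_le_of_le_one_right hβ hx.2).trans (le_max_right _ _)⟩

variable {Ω : Type*} [MeasurableSpace Ω] {μ : Measure Ω} [IsProbabilityMeasure μ]
  {Z : Ω → ℝ} {c p : ℝ}

lemma measure_scaleExceptOne_mem_insert {V : ℕ → ℝ} {s : Set ℕ}
    (hZ : μ {ω | Z ω ∈ insert 1 (insert 0 (V '' s))} = 1) :
    μ {ω | scaleExceptOne β (Z ω) ∈ insert (1 : ℝ) (insert 0 ((fun i => β * V i) '' s))} = 1 :=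
  le_antisymm prob_le_one (hZ.symm.le.trans (measure_mono fun _ hω => scaleExceptOne_mem_insert hω))

lemma measure_scaleExceptOne_mem_Icc {V : ℕ → ℝ} {s : Set ℕ}
    (hZ : μ {ω | Z ω ∈ insert 1 (insert 0 (V '' s))} = 1)
    (hV : ∀ i ∈ s, β * V i ∈ Set.Icc 0 1) : μ {ω | scaleExceptOne β (Z ω) ∈ Set.Icc 0 1} = 1 :=
  le_antisymm prob_le_one
    (hZ.symm.le.trans (measure_mono fun _ hω => scaleExceptOne_mem_Icc hω hV))

lemma backwardValue_scaleExceptOne (hZ : Measurable Z) (hZ01 : ∀ ω, Z ω ∈ Set.Icc 0 1)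
    (hc : 0 ≤ c) (hβ : 0 ≤ β) (hp : p = μ.real {ω | Z ω = 1}) {m : ℕ}
    (hβw : ∀ k < m, β * backwardValue μ Z c k ≤ 1) :
    ∀ k ≤ m, backwardValue μ (scaleExceptOne β ∘ Z) (β * (c - p) + p) k =
      β * backwardValue μ Z c k := by
  have hone : MeasurableSet {ω | Z ω = 1} := hZ measurableSet_eq
  have hint := Integrable.of_mem_Icc 0 1 hZ.aemeasurable (ae_of_all μ hZ01)
  intro k hk
  induction k with
  | zero => simp [backwardValue]
  | succ k ih =>
    have hmax : ∀ ω, max (scaleExceptOne β (Z ω)) (β * backwardValue μ Z c k) =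
        β * max (Z ω) (backwardValue μ Z c k) + {ω | Z ω = 1}.indicator (fun _ => 1 - β) ω := by
      intro ω
      by_cases h1 : Z ω = 1
      · simp [scaleExceptOne, h1, max_eq_left (hβw k (by omega)),
          max_eq_left (backwardValue_le_one hZ hZ01 hc k)]
      · simp [scaleExceptOne, h1, mul_max_of_nonneg _ _ hβ]
    simp only [backwardValue, Function.comp_apply, ih (by omega), hmax]
    rw [integral_add ((hint.max_const _).const_mul β) ((integrable_const _).indicator hone),
      integral_const_mul, integral_indicator_const _ hone, smul_eq_mul, ← hp]
    ring

end ScaleExceptOne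

theorem stmt18
    {Ω : Type*} [MeasurableSpace Ω] (μ : Measure Ω) [IsProbabilityMeasure μ]
    (n : ℕ) (X : ℕ → Ω → ℝ)
    (hmeas : ∀ i, Measurable (X i))
    (hindep : iIndepFun (fun i : Fin n => X (i.1 + 1)) μ)
    (hident : ∀ i ∈ Set.Icc 1 n, IdentDistrib (X i) (X 1) μ μ)
    (hval : ∀ i ∈ Set.Icc 1 n, ∀ ω, X i ω ∈ Set.Icc (0:ℝ) 1)
    (c : ℝ) (Y : ℕ → Ω → ℝ) (hY : ∀ i ω, Y i ω = X i ω - i * c)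
    (hn : 2 ≤ n) (hc : 0 < c) (hEX : c < ∫ ω, X 1 ω ∂μ)
    (hsupp : μ {ω | X 1 ω ∈ insert (1:ℝ) (insert 0 ((fun i => Vn μ Y i) '' Set.Icc 1 (n-1)))} = 1)
    (h1 : 0 < μ {ω | X 1 ω = 1}) (h0 : 0 < μ {ω | X 1 ω = 0})
    (p c' βstar : ℝ)
    (hp : p = (μ {ω | X 1 ω = 1}).toReal) (hc' : c' = c - p) (hβ : βstar = -p / c')
    (Xb : ℝ → ℕ → Ω → ℝ)
    (hXb : ∀ β h ω, Xb β h ω = if X h ω = 1 then 1 else β * X h ω)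
    (Yb : ℝ → ℕ → Ω → ℝ)
    (hYb : ∀ β h ω, Yb β h ω = Xb β h ω - h * (β * c' + p))
    :
    (∀ β ∈ Set.Icc (0:ℝ) βstar, ∀ h ∈ Set.Icc 1 (n-1), Vn μ (Yb β) h = β * Vn μ Y h) ∧
    (∀ β ∈ Set.Ioo (0:ℝ) βstar,
      (∀ i ∈ Set.Icc 1 n, μ {ω | Xb β i ω ∈ Set.Icc (0:ℝ) 1} = 1) ∧
      iIndepFun (fun i : Fin n => Xb β (i.1 + 1)) μ ∧
      (∀ i ∈ Set.Icc 1 n, IdentDistrib (Xb β i) (Xb β 1) μ μ) ∧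
      μ {ω | Xb β 1 ω ∈
        insert (1:ℝ) (insert 0 ((fun i => β * Vn μ Y i) '' Set.Icc 1 (n-1)))} = 1 ∧
      0 < μ {ω | Xb β 1 ω = 1} ∧ 0 < μ {ω | Xb β 1 ω = 0} ∧
      0 < β * c' + p) := by
  obtain rfl : Xb = fun β i => scaleExceptOne β ∘ X i :=
    funext fun β => funext fun i => funext (hXb β i)
  subst hβ hc'
  have hX01 := hval 1 ⟨le_rfl, by omega⟩
  have hDP : ∀ k ∈ Set.Icc 1 (n - 1), Vn μ Y k = backwardValue μ (X 1) c k := fun k hk =>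
    Vn_eq_backwardValue_of_mem_Icc hmeas hindep hident hval hY ⟨hk.1, hk.2.trans (Nat.sub_le n 1)⟩
  set S := insert (1 : ℝ) (insert 0 ((fun i => Vn μ Y i) '' Set.Icc 1 (n - 1)))
  have hS : MeasurableSet S :=
    ((((Set.Icc 1 (n - 1)).to_countable.image _).insert 0).insert 1).measurableSet
  obtain ⟨m, hm⟩ : ∃ m, n - 1 = m + 1 := ⟨n - 2, by omega⟩
  have hsupp' :
      ∀ᵐ ω ∂μ, X 1 ω ∈ insert 1 (insert 0 (backwardValue μ (X 1) c '' Set.Icc 1 (m + 1))) := by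
    rw [← hm, ← Set.image_congr hDP]
    exact (mem_ae_iff_prob_eq_one ((hmeas 1) hS)).2 hsupp
  have hβw : ∀ β ∈ Set.Icc 0 (-p / (c - p)), ∀ k ≤ n - 1, β * backwardValue μ (X 1) c k ≤ 1 :=
    fun β hβ k hk => mul_backwardValue_le_one (hmeas 1) hX01 hc hEX hsupp' hp hβ (hm ▸ hk)
  have hindepβ : ∀ β, iIndepFun (fun i : Fin n => scaleExceptOne β ∘ X (i.1 + 1)) μ := fun β =>
    hindep.comp _ fun _ => measurable_scaleExceptOne
  have hidentβ : ∀ β, ∀ i ∈ Set.Icc 1 n,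
      IdentDistrib (scaleExceptOne β ∘ X i) (scaleExceptOne β ∘ X 1) μ μ :=
    fun β i hi => (hident i hi).comp measurable_scaleExceptOne
  refine ⟨fun β hβ k hk => ?_, fun β hβ => ⟨fun i hi => ?_, hindepβ β, hidentβ β, ?_, ?_, ?_, ?_⟩⟩
  · rw [Vn_eq_backwardValue_of_mem_Icc (fun i => measurable_scaleExceptOne.comp (hmeas i))
      (hindepβ β) (hidentβ β) (fun i hi ω => scaleExceptOne_mem_Icc_max hβ.1 (hval i hi ω))
      (hYb β) ⟨hk.1, hk.2.trans (Nat.sub_le n 1)⟩, hDP k hk,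
      backwardValue_scaleExceptOne (hmeas 1) hX01 hc.le hβ.1 hp (fun k hk => hβw β hβ k hk.le) k
        hk.2]
  · refine measure_scaleExceptOne_mem_Icc (((hident i hi).measure_mem_eq hS).trans hsupp)
      fun j hj => ?_
    rw [hDP j hj]
    exact ⟨mul_nonneg hβ.1.le (backwardValue_monotone (hmeas 1) hX01 hEX.le (Nat.zero_le j)),
      hβw β ⟨hβ.1.le, hβ.2.le⟩ j hj.2⟩
  · exact measure_scaleExceptOne_mem_insert hsupp
  · exact h1.trans_le (measure_mono fun ω (hω : X 1 ω = 1) => by simp [scaleExceptOne, hω])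
  · exact h0.trans_le (measure_mono fun ω (hω : X 1 ω = 0) => by simp [scaleExceptOne, hω])
  · have hpc := lt_measureReal_setOf_eq_one (hmeas 1) hX01 hc hEX hsupp' hp
    have := hβ.2
    rw [← neg_sub, div_neg, neg_div, neg_neg, lt_div_iff₀ (sub_pos.2 hpc)] at this
    linarith
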